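/- arXiv:1909.04992 — 2 statements merged into one kernel-verified Lean document; each statement's English description precedes it below -/
import Mathlib

section
/- Let E be a Euclidean lattice of positive rank and F a saturated ℤ-submodule of E. Then covol(E) = covol(F) · covol(E/F), where F carries the restricted norm and E/F the quotient norm. -/
open MeasureTheory Submodule Module



noncomputable section AuxCovol

set_option linter.unusedSectionVars false
variable {V : Type*} [NormedAddCommGroup V] [InnerProductSpace ℝ V] [FiniteDimensional ℝ V]

lemma auxcovol_image_comap (F : Submodule ℤ V) :
    (span ℝ (F : Set V)).subtype ''
      ((comap (((span ℝ (F : Set V)).subtype).restrictScalars ℤ) F :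
        Submodule ℤ (span ℝ (F : Set V))) : Set (span ℝ (F : Set V))) = (F : Set V) := by
  ext x
  constructor
  · rintro ⟨y, hy, rfl⟩; exact hy
  · intro hx; exact ⟨⟨x, subset_span hx⟩, hx, rfl⟩

lemma auxcovol_span_comap_top (F : Submodule ℤ V) :
    span ℝ ((comap (((span ℝ (F : Set V)).subtype).restrictScalars ℤ) F :
        Submodule ℤ (span ℝ (F : Set V))) : Set (span ℝ (F : Set V))) = ⊤ := by
  apply Submodule.map_injective_of_injective (injective_subtype (span ℝ (F : Set V)))
  rw [Submodule.map_span, Submodule.map_top, range_subtype, auxcovol_image_comap]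

lemma auxcovol_discrete_comap {L S : Submodule ℤ V} [DiscreteTopology L] (hSL : S ≤ L)
    (W : Submodule ℝ V) :
    DiscreteTopology (comap ((W.subtype).restrictScalars ℤ) S) := by
  have hL : DiscreteTopology S := by
    have : DiscreteTopology ((S : Set V) : Set V) :=
      DiscreteTopology.of_subset (s := (L : Set V)) inferInstance hSL
    exact this
  refine DiscreteTopology.of_continuous_injective
    (f := fun x : comap ((W.subtype).restrictScalars ℤ) S => (⟨(x : W), x.2⟩ : S)) ?_ ?_
  · exact Continuous.subtype_mk (continuous_subtype_val.comp continuous_subtype_val) _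
  · intro a b hab
    simp only [Subtype.mk.injEq] at hab
    have h : ((a : W) : V) = ((b : W) : V) := congrArg (fun y : S => (y : V)) hab
    exact Subtype.val_injective (Subtype.val_injective h)


lemma auxcovol_mem_of_mem_span {L F : Submodule ℤ V} [DiscreteTopology L]
    (hFL : F ≤ L) (hsat : ∀ v ∈ L, ∀ k : ℤ, k ≠ 0 → k • v ∈ F → v ∈ F)
    {x : V} (hxL : x ∈ L) (hxW : x ∈ span ℝ (F : Set V)) : x ∈ F := by
  set W : Submodule ℝ V := span ℝ (F : Set V) with hWdef
  set S : Submodule ℤ V := F ⊔ span ℤ {x} with hSdef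
  have hxS : x ∈ S := (le_sup_right : span ℤ {x} ≤ S) (mem_span_singleton_self x)
  have hSL : S ≤ L := sup_le hFL ((span_le).2 (by simpa using hxL))
  set F' : Submodule ℤ W := comap ((W.subtype).restrictScalars ℤ) F with hF'def
  set S' : Submodule ℤ W := comap ((W.subtype).restrictScalars ℤ) S with hS'def
  haveI : DiscreteTopology F' := auxcovol_discrete_comap hFL W
  haveI : DiscreteTopology S' := auxcovol_discrete_comap hSL W
  haveI hzF' : IsZLattice ℝ F' := ⟨auxcovol_span_comap_top F⟩
  have hF'S' : F' ≤ S' := comap_mono le_sup_left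
  haveI hzS' : IsZLattice ℝ S' := ⟨by
    rw [eq_top_iff, ← auxcovol_span_comap_top F]
    exact span_mono hF'S'⟩
  haveI : Module.Finite ℤ S' := ZLattice.module_finite ℝ S'
  haveI : Module.Finite ℤ F' := ZLattice.module_finite ℝ F'
  set F'' : Submodule ℤ S' := comap S'.subtype F' with hF''def
  have eFF : F'' ≃ₗ[ℤ] F' := comapSubtypeEquivOfLe hF'S'
  haveI : Module.Finite ℤ F'' := Module.Finite.equiv eFF.symm
  have hrkeq : Module.rank ℤ F'' = Module.rank ℤ S' := by
    rw [eFF.rank_eq, ← Module.finrank_eq_rank, ← Module.finrank_eq_rank,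
      ZLattice.rank ℝ F', ZLattice.rank ℝ S']
  have hrk0 : Module.rank ℤ (S' ⧸ F'') = 0 := by
    have h1 := rank_quotient_add_rank (R := ℤ) F''
    rw [hrkeq] at h1
    refine Cardinal.eq_of_add_eq_add_right ?_ (Module.rank_lt_aleph0 ℤ S')
    rw [h1, zero_add]
  have hxW' : (⟨x, hxW⟩ : W) ∈ S' := by simpa [hS'def] using hxS
  obtain ⟨k, hk0, hk⟩ := rank_eq_zero_iff.mp hrk0
    (Submodule.Quotient.mk (⟨⟨x, hxW⟩, hxW'⟩ : S'))
  rw [← Submodule.Quotient.mk_smul, Submodule.Quotient.mk_eq_zero] at hk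
  have hkxF : k • x ∈ F := by simpa [hF''def, hF'def] using hk
  exact hsat x hxL k hk0 hkxF


lemma auxcovol_covolume_eq {ι : Type*} [Fintype ι] [DecidableEq ι]
    [MeasurableSpace V] [BorelSpace V]
    (M : Submodule ℤ V) [DiscreteTopology M] [IsZLattice ℝ M]
    (bM : Basis ι ℤ M) (b : Basis ι ℝ V) (hb : Orthonormal ℝ ⇑b) :
    ZLattice.covolume M volume = |b.det (fun i => (bM i : V))| := by
  rw [ZLattice.covolume_eq_det_mul_measureReal M volume bM b,
    measureReal_congr (ZSpan.fundamentalDomain_ae_parallelepiped b volume)]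
  have h1 : volume (parallelepiped ⇑b) = 1 := by
    have := (b.toOrthonormalBasis hb).volume_parallelepiped
    rwa [Basis.coe_toOrthonormalBasis] at this
  rw [measureReal_def, h1, ENNReal.toReal_one, mul_one]
  rfl

end AuxCovol

set_option maxHeartbeats 1000000 in
/-- For a Euclidean lattice `L` of positive rank and a saturated `ℤ`-submodule
`F` of `L`, one has `covol(L) = covol(F) · covol(L/F)`, where `F` carries the restricted
Euclidean structure (i.e. it is viewed as a lattice in the real span `W` of `F`), and the
quotient `L/F` with its quotient norm is identified with the image of `L` under the
orthogonal projection onto `Wᗮ`. -/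
theorem covolume_eq_covolume_mul_covolume_quotient
    (n : ℕ) (hn : 0 < n) (L : Submodule ℤ (EuclideanSpace ℝ (Fin n)))
    [DiscreteTopology L] [IsZLattice ℝ L]
    (F : Submodule ℤ (EuclideanSpace ℝ (Fin n))) (hFL : F ≤ L)
    (hsat : ∀ v ∈ L, ∀ k : ℤ, k ≠ 0 → k • v ∈ F → v ∈ F) :
    ZLattice.covolume L volume =
      ZLattice.covolume
        (Submodule.comap
          (((Submodule.span ℝ (F : Set (EuclideanSpace ℝ (Fin n)))).subtype).restrictScalars ℤ) F)
        ((stdOrthonormalBasis ℝ (Submodule.span ℝ (F : Set (EuclideanSpace ℝ (Fin n))))).toBasis.addHaar) *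
      ZLattice.covolume
        (Submodule.map
          ((orthogonalProjection (Submodule.span ℝ (F : Set (EuclideanSpace ℝ (Fin n))))ᗮ).toLinearMap.restrictScalars ℤ)
          L)
        ((stdOrthonormalBasis ℝ ((Submodule.span ℝ (F : Set (EuclideanSpace ℝ (Fin n))))ᗮ)).toBasis.addHaar) := by
  classical
  set W : Submodule ℝ (EuclideanSpace ℝ (Fin n)) :=
    span ℝ (F : Set (EuclideanSpace ℝ (Fin n))) with hW
  set F' : Submodule ℤ W := comap ((W.subtype).restrictScalars ℤ) F with hF'
  set prZ : EuclideanSpace ℝ (Fin n) →ₗ[ℤ] ↥(Wᗮ) :=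
    ((orthogonalProjection Wᗮ).toLinearMap.restrictScalars ℤ) with hprZ
  set Q : Submodule ℤ ↥(Wᗮ) := map prZ L with hQdef
  rw [(stdOrthonormalBasis ℝ W).addHaar_eq_volume, (stdOrthonormalBasis ℝ ↥(Wᗮ)).addHaar_eq_volume]
  have hc : IsCompl W Wᗮ := Submodule.isCompl_orthogonal_of_hasOrthogonalProjection
  set m := finrank ℝ W with hm
  set kk := finrank ℝ ↥(Wᗮ) with hkk
  -- instances for F'
  haveI hdF' : DiscreteTopology F' := auxcovol_discrete_comap hFL W
  haveI hzF' : IsZLattice ℝ F' := ⟨auxcovol_span_comap_top F⟩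
  have hFW : F ≤ W.restrictScalars ℤ := fun y hy => subset_span hy
  set eF'F : F' ≃ₗ[ℤ] F := comapSubtypeEquivOfLe hFW with heF'F
  haveI hdF : DiscreteTopology F := by
    have h0 : DiscreteTopology ((F : Set (EuclideanSpace ℝ (Fin n))) : Set _) :=
      DiscreteTopology.of_subset (s := (L : Set (EuclideanSpace ℝ (Fin n)))) inferInstance hFL
    exact h0
  set FL : Submodule ℤ L := comap (L.subtype) F with hFLdef
  set eFLF : FL ≃ₗ[ℤ] F := comapSubtypeEquivOfLe hFL with heFLF
  haveI : NoZeroSMulDivisors ℤ (L ⧸ FL) := by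
    refine ⟨fun {c y} h => ?_⟩
    rcases eq_or_ne c 0 with rfl | hc
    · exact Or.inl rfl
    · refine Or.inr ?_
      obtain ⟨u, rfl⟩ := Submodule.Quotient.mk_surjective FL y
      rw [← Submodule.Quotient.mk_smul, Submodule.Quotient.mk_eq_zero] at h
      rw [Submodule.Quotient.mk_eq_zero]
      exact hsat _ u.2 c hc h
  haveI : Module.Finite ℤ (L ⧸ FL) := inferInstance
  haveI : Module.Free ℤ (L ⧸ FL) := Module.free_of_finite_type_torsion_free'
  obtain ⟨s, hs⟩ := Module.projective_lifting_property FL.mkQ (LinearMap.id) FL.mkQ_surjective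
  have hsection : ∀ y, FL.mkQ (s y) = y := fun y => LinearMap.congr_fun hs y
  set f : (FL × (L ⧸ FL)) →ₗ[ℤ] L := FL.subtype.coprod s with hf
  have hmkQz : ∀ a : FL, (Submodule.Quotient.mk (a : L) : L ⧸ FL) = 0 :=
    fun a => (Submodule.Quotient.mk_eq_zero FL).mpr a.2
  have hinj : Function.Injective f := by
    rintro ⟨a1, a2⟩ ⟨b1, b2⟩ hab
    have h2 : a2 = b2 := by
      have := congrArg FL.mkQ hab
      simpa [hf, LinearMap.coprod_apply, map_add, hmkQz, hsection] using this
    have h1 : a1 = b1 := by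
      subst h2
      have : FL.subtype a1 = FL.subtype b1 := by
        have := hab
        simp only [hf, LinearMap.coprod_apply] at this
        exact add_right_cancel this
      exact Subtype.val_injective this
    exact Prod.ext h1 h2
  have hsurjf : Function.Surjective f := by
    intro x
    have hmem : x - s (FL.mkQ x) ∈ FL := by
      rw [← Submodule.Quotient.mk_eq_zero, ← Submodule.mkQ_apply, map_sub, hsection, sub_self]
    refine ⟨(⟨x - s (FL.mkQ x), hmem⟩, FL.mkQ x), ?_⟩
    simp [hf, LinearMap.coprod_apply]
  set eL : (FL × (L ⧸ FL)) ≃ₗ[ℤ] L := LinearEquiv.ofBijective f ⟨hinj, hsurjf⟩ with heL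
  -- finrank bookkeeping
  haveI : Module.Finite ℤ F := Module.Finite.equiv eF'F
  haveI : Module.Free ℤ F := Module.Free.of_equiv eF'F
  haveI : Module.Finite ℤ FL := Module.Finite.equiv eFLF.symm
  haveI : Module.Free ℤ FL := Module.Free.of_equiv eFLF.symm
  have hrankL : finrank ℤ L = n := by
    rw [ZLattice.rank ℝ L, finrank_euclideanSpace_fin]
  have hrankF' : finrank ℤ F' = m := ZLattice.rank ℝ F'
  have hrankFL : finrank ℤ FL = m := by
    rw [eFLF.finrank_eq, ← eF'F.finrank_eq, hrankF']
  have hmk : m + kk = n := by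
    rw [hm, hkk, W.finrank_add_finrank_orthogonal, finrank_euclideanSpace_fin]
  have hrankQt : finrank ℤ (L ⧸ FL) = kk := by
    have h1 : finrank ℤ (FL × (L ⧸ FL)) = finrank ℤ L := eL.finrank_eq
    rw [Module.finrank_prod, hrankFL, hrankL] at h1
    omega
  -- adapted ℤ-bases
  set b1 : Basis (Fin m) ℤ FL := (Module.Free.chooseBasis ℤ FL).reindex
    (Fintype.equivFinOfCardEq (by rw [← finrank_eq_card_chooseBasisIndex, hrankFL])) with hb1
  set b2 : Basis (Fin kk) ℤ (L ⧸ FL) := (Module.Free.chooseBasis ℤ (L ⧸ FL)).reindex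
    (Fintype.equivFinOfCardEq (by rw [← finrank_eq_card_chooseBasisIndex, hrankQt])) with hb2
  set bL : Basis (Fin m ⊕ Fin kk) ℤ L := (b1.prod b2).map eL with hbL
  have hbLinl : ∀ i, bL (Sum.inl i) = FL.subtype (b1 i) := by
    intro i
    have hp : (b1.prod b2) (Sum.inl i) = (b1 i, 0) :=
      Prod.ext (b1.prod_apply_inl_fst b2 i) (b1.prod_apply_inl_snd b2 i)
    rw [hbL, Basis.map_apply, hp]
    show f (b1 i, 0) = _
    rw [hf,
      LinearMap.coprod_apply, map_zero, add_zero]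
  have hbLinr : ∀ j, bL (Sum.inr j) = s (b2 j) := by
    intro j
    have hp : (b1.prod b2) (Sum.inr j) = (0, b2 j) :=
      Prod.ext (b1.prod_apply_inr_fst b2 j) (b1.prod_apply_inr_snd b2 j)
    rw [hbL, Basis.map_apply, hp]
    show f (0, b2 j) = _
    rw [hf,
      LinearMap.coprod_apply, map_zero, zero_add]
  have hmemF : ∀ i, ((bL (Sum.inl i) : L) : EuclideanSpace ℝ (Fin n)) ∈ F := by
    intro i
    rw [hbLinl]
    exact (b1 i).2
  have hproj0 : ∀ i, orthogonalProjection Wᗮ ((bL (Sum.inl i) : L) : EuclideanSpace ℝ (Fin n)) = 0 :=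
    fun i => orthogonalProjection_mem_subspace_orthogonalComplement_eq_zero
      (W.le_orthogonal_orthogonal (subset_span (hmemF i)))
  set vQ : Fin kk → ↥(Wᗮ) :=
    fun j => orthogonalProjection Wᗮ ((bL (Sum.inr j) : L) : EuclideanSpace ℝ (Fin n)) with hvQ
  set bE := bL.ofZLatticeBasis ℝ L with hbE
  set P : EuclideanSpace ℝ (Fin n) →ₗ[ℝ] ↥(Wᗮ) := (orthogonalProjection Wᗮ).toLinearMap with hP
  have hPapp : ∀ x, P x = orthogonalProjection Wᗮ x := fun _ => rfl
  have hPsurj : Function.Surjective P := fun y =>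
    ⟨y, orthogonalProjection_mem_subspace_eq_self y⟩
  have hQtop : ⊤ ≤ span ℝ (Set.range vQ) := by
    have h0 : (⊤ : Submodule ℝ ↥(Wᗮ)) = map P (span ℝ (Set.range ⇑bE)) := by
      rw [bE.span_eq, Submodule.map_top, LinearMap.range_eq_top.mpr hPsurj]
    rw [h0, Submodule.map_span]
    refine span_le.2 ?_
    rintro y ⟨x, ⟨i, rfl⟩, rfl⟩
    cases i with
    | inl i =>
      have : P (bE (Sum.inl i)) = 0 := by
        rw [hbE, Basis.ofZLatticeBasis_apply, hPapp, hproj0 i]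
      rw [this]
      exact zero_mem _
    | inr j =>
      have : P (bE (Sum.inr j)) = vQ j := by
        rw [hbE, Basis.ofZLatticeBasis_apply, hPapp, hvQ]
      rw [this]
      exact subset_span ⟨j, rfl⟩
  have hcardkk : Fintype.card (Fin kk) = finrank ℝ ↥(Wᗮ) := by rw [Fintype.card_fin]
  set bWQ : Basis (Fin kk) ℝ ↥(Wᗮ) := basisOfTopLeSpanOfCardEqFinrank vQ hQtop hcardkk with hbWQ
  have hbWQcoe : ⇑bWQ = vQ := coe_basisOfTopLeSpanOfCardEqFinrank vQ hQtop hcardkk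
  have hQspan : Q = span ℤ (Set.range ⇑bWQ) := by
    rw [hbWQcoe, hQdef, ← bL.ofZLatticeBasis_span ℝ, ← hbE, Submodule.map_span]
    apply le_antisymm
    · refine span_le.2 ?_
      rintro y ⟨x, ⟨i, rfl⟩, rfl⟩
      cases i with
      | inl i =>
        have : prZ (bE (Sum.inl i)) = 0 := by
          rw [hbE, Basis.ofZLatticeBasis_apply, hprZ]
          exact hproj0 i
        rw [this]
        exact zero_mem _
      | inr j =>
        have : prZ (bE (Sum.inr j)) = vQ j := by
          rw [hbE, Basis.ofZLatticeBasis_apply, hprZ, hvQ]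
          rfl
        rw [this]
        exact subset_span ⟨j, rfl⟩
    · refine span_le.2 ?_
      rintro y ⟨j, rfl⟩
      have : prZ (bE (Sum.inr j)) = vQ j := by
        rw [hbE, Basis.ofZLatticeBasis_apply, hprZ, hvQ]
        rfl
      exact subset_span ⟨bE (Sum.inr j), ⟨Sum.inr j, rfl⟩, this⟩
  haveI hdQ : DiscreteTopology Q := by rw [hQspan]; infer_instance
  haveI hzQ : IsZLattice ℝ Q := by
    refine ⟨?_⟩
    rw [hQspan]
    exact ZSpan.span_top bWQ
  set bQ : Basis (Fin kk) ℤ Q :=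
    (bWQ.restrictScalars ℤ).map (LinearEquiv.ofEq _ _ hQspan.symm) with hbQ
  have hbQcoe : ∀ j, ((bQ j : Q) : ↥(Wᗮ)) = vQ j := by
    intro j
    rw [hbQ, Basis.map_apply]
    have h1 : ((LinearEquiv.ofEq _ _ hQspan.symm) (bWQ.restrictScalars ℤ j) : ↥(Wᗮ))
        = ((bWQ.restrictScalars ℤ j : span ℤ (Set.range ⇑bWQ)) : ↥(Wᗮ)) := rfl
    rw [h1, Basis.restrictScalars_apply, hbWQcoe]
  set bF' : Basis (Fin m) ℤ F' := b1.map (eFLF.trans eF'F.symm) with hbF'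
  have hbF'coe : ∀ i, ((bF' i : F') : W) = (⟨((bL (Sum.inl i) : L) : EuclideanSpace ℝ (Fin n)),
      subset_span (hmemF i)⟩ : W) := by
    intro i
    apply Subtype.ext
    rw [hbF', Basis.map_apply]
    have h1 : ((eFLF (b1 i) : F) : EuclideanSpace ℝ (Fin n))
        = ((b1 i : L) : EuclideanSpace ℝ (Fin n)) := comapSubtypeEquivOfLe_apply_coe hFL (b1 i)
    have h2 : (((eF'F.symm (eFLF (b1 i)) : F') : W) : EuclideanSpace ℝ (Fin n))
        = ((eFLF (b1 i) : F) : EuclideanSpace ℝ (Fin n)) := by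
      conv_rhs => rw [← eF'F.apply_symm_apply (eFLF (b1 i))]
      exact (comapSubtypeEquivOfLe_apply_coe hFW _).symm
    show (((eFLF.trans eF'F.symm) (b1 i) : F') : W) = ((bL (Sum.inl i) : L) : EuclideanSpace ℝ (Fin n))
    rw [LinearEquiv.trans_apply] at *
    rw [hbLinl]
    exact h2.trans h1
  -- the adapted orthonormal basis of the ambient space
  set v := stdOrthonormalBasis ℝ ↥W with hv
  set w := stdOrthonormalBasis ℝ ↥(Wᗮ) with hw
  set oB : Basis (Fin m ⊕ Fin kk) ℝ (EuclideanSpace ℝ (Fin n)) :=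
    (v.toBasis.prod w.toBasis).map (W.prodEquivOfIsCompl Wᗮ hc) with hoB
  have hoBinl : ∀ i, oB (Sum.inl i) = ((v i : W) : EuclideanSpace ℝ (Fin n)) := by
    intro i
    have hp : (v.toBasis.prod w.toBasis) (Sum.inl i) = (v.toBasis i, 0) :=
      Prod.ext (v.toBasis.prod_apply_inl_fst w.toBasis i) (v.toBasis.prod_apply_inl_snd w.toBasis i)
    rw [hoB, Basis.map_apply, hp, Submodule.coe_prodEquivOfIsCompl', OrthonormalBasis.coe_toBasis]
    simp
  have hoBinr : ∀ j, oB (Sum.inr j) = ((w j : ↥(Wᗮ)) : EuclideanSpace ℝ (Fin n)) := by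
    intro j
    have hp : (v.toBasis.prod w.toBasis) (Sum.inr j) = (0, w.toBasis j) :=
      Prod.ext (v.toBasis.prod_apply_inr_fst w.toBasis j) (v.toBasis.prod_apply_inr_snd w.toBasis j)
    rw [hoB, Basis.map_apply, hp, Submodule.coe_prodEquivOfIsCompl', OrthonormalBasis.coe_toBasis]
    simp
  have honb : Orthonormal ℝ ⇑oB := by
    rw [orthonormal_iff_ite]
    intro i j
    have hvon := orthonormal_iff_ite.mp v.orthonormal
    have hwon := orthonormal_iff_ite.mp w.orthonormal
    cases i with
    | inl i =>
      cases j with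
      | inl j =>
        rw [hoBinl, hoBinl, ← Submodule.coe_inner, hvon i j]
        simp
      | inr j =>
        rw [hoBinl, hoBinr]
        rw [(w j).2 ((v i : W) : EuclideanSpace ℝ (Fin n)) (v i).2]
        simp
    | inr i =>
      cases j with
      | inl j =>
        rw [hoBinr, hoBinl]
        rw [real_inner_comm, (w i).2 ((v j : W) : EuclideanSpace ℝ (Fin n)) (v j).2]
        simp
      | inr j =>
        rw [hoBinr, hoBinr, ← Submodule.coe_inner, hwon i j]
        simp
  have hsymm : ∀ x : EuclideanSpace ℝ (Fin n), (W.prodEquivOfIsCompl Wᗮ hc).symm x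
      = (orthogonalProjection W x, orthogonalProjection Wᗮ x) := by
    intro x
    rw [LinearEquiv.symm_apply_eq, Submodule.coe_prodEquivOfIsCompl']
    exact (W.starProjection_add_starProjection_orthogonal x).symm
  have hrepr : ∀ (x : EuclideanSpace ℝ (Fin n)) (i : Fin m ⊕ Fin kk),
      oB.repr x i = Sum.elim (fun r => v.toBasis.repr (orthogonalProjection W x) r)
        (fun r => w.toBasis.repr (orthogonalProjection Wᗮ x) r) i := by
    intro x i
    have h0 : oB.repr x = (v.toBasis.prod w.toBasis).repr ((W.prodEquivOfIsCompl Wᗮ hc).symm x) := by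
      rw [hoB, Basis.map_repr]
      rfl
    cases i with
    | inl r => rw [h0, Basis.prod_repr_inl, hsymm]; simp
    | inr r => rw [h0, Basis.prod_repr_inr, hsymm]; simp
  have hA : oB.toMatrix (fun i => ((bL i : L) : EuclideanSpace ℝ (Fin n))) =
      Matrix.fromBlocks (v.toBasis.toMatrix (fun i => ((bF' i : F') : W)))
        (Matrix.of fun r j =>
          oB.repr ((bL (Sum.inr j) : L) : EuclideanSpace ℝ (Fin n)) (Sum.inl r)) 0
        (w.toBasis.toMatrix (fun j => ((bQ j : Q) : ↥(Wᗮ)))) := by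
    ext i j
    cases i with
    | inl r =>
      cases j with
      | inl i =>
        rw [Basis.toMatrix_apply, hrepr, Matrix.fromBlocks_apply₁₁, Basis.toMatrix_apply]
        simp only [Sum.elim_inl]
        have hXY : orthogonalProjection W ((bL (Sum.inl i) : L) : EuclideanSpace ℝ (Fin n))
            = ((bF' i : F') : W) := by
          rw [hbF'coe i]
          apply Subtype.ext
          exact Submodule.starProjection_eq_self_iff.mpr (subset_span (hmemF i))
        rw [hXY]
      | inr jj =>
        rw [Basis.toMatrix_apply, Matrix.fromBlocks_apply₁₂]
        rfl
    | inr r =>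
      cases j with
      | inl i =>
        rw [Basis.toMatrix_apply, hrepr, Matrix.fromBlocks_apply₂₁]
        simp only [Sum.elim_inr]
        rw [hproj0 i, map_zero]
        simp
      | inr jj =>
        rw [Basis.toMatrix_apply, hrepr, Matrix.fromBlocks_apply₂₂, Basis.toMatrix_apply]
        simp only [Sum.elim_inr]
        rw [hbQcoe jj]
  have hdet : oB.det (fun i => ((bL i : L) : EuclideanSpace ℝ (Fin n))) =
      (v.toBasis.det (fun i => ((bF' i : F') : W)))
        * (w.toBasis.det (fun j => ((bQ j : Q) : ↥(Wᗮ)))) := by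
    rw [Basis.det_apply, Basis.det_apply, Basis.det_apply, hA, Matrix.det_fromBlocks_zero₂₁]
  have hvon : Orthonormal ℝ ⇑v.toBasis := by rw [OrthonormalBasis.coe_toBasis]; exact v.orthonormal
  have hwon : Orthonormal ℝ ⇑w.toBasis := by rw [OrthonormalBasis.coe_toBasis]; exact w.orthonormal
  rw [auxcovol_covolume_eq L bL oB honb, auxcovol_covolume_eq F' bF' v.toBasis hvon,
    auxcovol_covolume_eq Q bQ w.toBasis hwon, hdet, abs_mul]
end

section
/- Let E be a Euclidean lattice of positive rank n with λ₁(E) > √(n/(2π)), and write λ₁(E) = √(n/(2π))·λ̃ with λ̃ > 1. Then θ_E(1) := ∑_{v ∈ E} e^{-π‖v‖²} ≤ (1 − β(λ̃)^n)^{-1}, where β(r) := r·e^{-(r²−1)/2}. -/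
open Real

namespace ThetaBound

/-- Coordinatewise "parallelogram" reindexing equivalence:
`(ε, m, m') ↦ (u, w) = (ε + m + m', m - m')`. -/
def flipEquivPi (n : ℕ) :
    ((Fin n → Bool) × (Fin n → ℤ) × (Fin n → ℤ)) ≃ ((Fin n → ℤ) × (Fin n → ℤ)) where
  toFun x := (fun i => (cond (x.1 i) 1 0) + x.2.1 i + x.2.2 i, fun i => x.2.1 i - x.2.2 i)
  invFun y := (fun i => decide ((y.1 i + y.2 i) % 2 = 1),
    fun i => (y.1 i + y.2 i - (y.1 i + y.2 i) % 2) / 2,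
    fun i => (y.1 i + y.2 i - (y.1 i + y.2 i) % 2) / 2 - y.2 i)
  left_inv := by
    rintro ⟨e, m, m'⟩
    refine Prod.ext (funext fun i => ?_) (Prod.ext (funext fun i => ?_) (funext fun i => ?_))
    · rcases he : e i <;> simp [he] <;> omega
    · rcases he : e i <;> simp [he] <;> omega
    · rcases he : e i <;> simp [he] <;> omega
  right_inv := by
    rintro ⟨u, w⟩
    refine Prod.ext (funext fun i => ?_) (funext fun i => ?_)
    · show (cond (decide ((u i + w i) % 2 = 1)) 1 0)
          + (u i + w i - (u i + w i) % 2) / 2 + ((u i + w i - (u i + w i) % 2) / 2 - w i) = u i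
      rcases Int.emod_two_eq (u i + w i) with h | h <;> simp [h] <;> omega
    · show (u i + w i - (u i + w i) % 2) / 2 - ((u i + w i - (u i + w i) % 2) / 2 - w i) = w i
      omega

lemma summable_pi_prod {f : ℤ → ℝ} (hf0 : ∀ x, 0 ≤ f x) (hf : Summable f) (n : ℕ) :
    Summable fun k : Fin n → ℤ => ∏ i, f (k i) := by
  induction n with
  | zero =>
      haveI : Finite (Fin 0 → ℤ) := inferInstance
      exact Summable.of_finite
  | succ n ih =>
      have h2 : Summable fun p : ℤ × (Fin n → ℤ) => f p.1 * ∏ i, f (p.2 i) :=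
        Summable.mul_of_nonneg (g := fun k : Fin n → ℤ => ∏ i, f (k i)) hf ih
          (fun x => hf0 x) (fun k => Finset.prod_nonneg fun i _ => hf0 _)
      have hcomp : (fun k : Fin (n + 1) → ℤ => ∏ i, f (k i))
          = (fun p : ℤ × (Fin n → ℤ) => f p.1 * ∏ i, f (p.2 i))
            ∘ ((Fin.consEquiv (fun _ : Fin (n + 1) => ℤ)).symm) := by
        funext k
        simp only [Function.comp_apply, Fin.prod_univ_succ]
        rfl
      rw [hcomp]
      exact h2.comp_injective (Equiv.injective _)

lemma summable_exp_int_sq {a : ℝ} (ha : 0 < a) :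
    Summable fun m : ℤ => rexp (-a * (m : ℝ) ^ 2) := by
  have h := summable_pow_mul_jacobiTheta₂_term_bound 0 (T := a / π) (by positivity) 0
  refine h.congr fun m => ?_
  simp only [pow_zero, one_mul, mul_zero, zero_mul, sub_zero]
  congr 1
  field_simp

section LatticeSums

variable {n : ℕ} (bR : Module.Basis (Fin n) ℝ (EuclideanSpace ℝ (Fin n)))

/-- The point of the lattice spanned by `bR` with integer coordinates `k`. -/
noncomputable def lpt (k : Fin n → ℤ) : EuclideanSpace ℝ (Fin n) :=
  ∑ i, (k i : ℝ) • bR i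

lemma lpt_add (k j : Fin n → ℤ) : lpt bR (k + j) = lpt bR k + lpt bR j := by
  simp only [lpt, Pi.add_apply, Int.cast_add, add_smul, Finset.sum_add_distrib]

lemma lpt_zero : lpt bR (0 : Fin n → ℤ) = 0 := by simp [lpt]

lemma lpt_eq_equivFun_symm (k : Fin n → ℤ) :
    lpt bR k = bR.equivFun.symm (fun i => (k i : ℝ)) := by
  rw [Module.Basis.equivFun_symm_apply]
  rfl

lemma lpt_equivFun (k : Fin n → ℤ) (i : Fin n) :
    bR.equivFun (lpt bR k) i = (k i : ℝ) := by
  rw [lpt_eq_equivFun_symm, LinearEquiv.apply_symm_apply]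

/-- The summand of the theta-like series. -/
noncomputable def th (t : ℝ) (y : EuclideanSpace ℝ (Fin n)) (k : Fin n → ℤ) : ℝ :=
  rexp (-(π * t) * ‖y + lpt bR k‖ ^ 2)

lemma th_nonneg (t : ℝ) (y : EuclideanSpace ℝ (Fin n)) (k : Fin n → ℤ) :
    0 ≤ th bR t y k := (Real.exp_pos _).le

lemma th_pos (t : ℝ) (y : EuclideanSpace ℝ (Fin n)) (k : Fin n → ℤ) :
    0 < th bR t y k := Real.exp_pos _

lemma summable_th {t : ℝ} (ht : 0 < t) (y : EuclideanSpace ℝ (Fin n)) :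
    Summable (th bR t y) := by
  rcases Nat.eq_zero_or_pos n with hn | hn
  · subst hn
    exact Summable.of_finite
  have hn' : (0 : ℝ) < n := by exact_mod_cast hn
  obtain ⟨C, hC0, hC⟩ : ∃ C : ℝ, 0 < C ∧
      ∀ x : EuclideanSpace ℝ (Fin n), ‖bR.equivFun x‖ ≤ C * ‖x‖ := by
    have hWc : Continuous bR.equivFun.toLinearMap :=
      LinearMap.continuous_of_finiteDimensional _
    let Wc : EuclideanSpace ℝ (Fin n) →L[ℝ] (Fin n → ℝ) := ⟨bR.equivFun.toLinearMap, hWc⟩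
    refine ⟨‖Wc‖ + 1, by positivity, fun x => ?_⟩
    have h1 : ‖Wc x‖ ≤ ‖Wc‖ * ‖x‖ := Wc.le_opNorm x
    have h2 : (0:ℝ) ≤ ‖x‖ := norm_nonneg x
    have h3 : (0:ℝ) ≤ ‖Wc‖ := norm_nonneg Wc
    have h4 : ‖Wc x‖ = ‖bR.equivFun x‖ := rfl
    nlinarith
  obtain ⟨d, hdy, hd0⟩ : ∃ d : ℝ, ‖bR.equivFun y‖ = d ∧ 0 ≤ d := ⟨_, rfl, norm_nonneg _⟩
  obtain ⟨α, hα, hα0⟩ : ∃ α : ℝ, α = π * t / (2 * n * C ^ 2) ∧ 0 < α := ⟨_, rfl, by positivity⟩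
  have hbound : ∀ k : Fin n → ℤ, th bR t y k ≤
      rexp (π * t * d ^ 2 / C ^ 2) * ∏ i, rexp (-α * ((k i : ℝ)) ^ 2) := by
    intro k
    have h1 : ∀ i, |(k i : ℝ)| ≤ ‖bR.equivFun (lpt bR k)‖ := by
      intro i
      have h := lpt_equivFun bR k i
      calc |(k i : ℝ)| = ‖(bR.equivFun (lpt bR k)) i‖ := by
            rw [show (bR.equivFun (lpt bR k)) i = ((k i : ℝ)) from h]
            exact (Real.norm_eq_abs _).symm
        _ ≤ ‖bR.equivFun (lpt bR k)‖ := norm_le_pi_norm (bR.equivFun (lpt bR k)) i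
    have h2 : ‖bR.equivFun (lpt bR k)‖ ≤ d + C * ‖y + lpt bR k‖ := by
      have h3 : bR.equivFun (lpt bR k) = bR.equivFun (y + lpt bR k) - bR.equivFun y := by
        rw [map_add]; abel
      calc ‖bR.equivFun (lpt bR k)‖
          = ‖bR.equivFun (y + lpt bR k) - bR.equivFun y‖ := by rw [h3]
        _ ≤ ‖bR.equivFun (y + lpt bR k)‖ + ‖bR.equivFun y‖ := norm_sub_le _ _
        _ ≤ C * ‖y + lpt bR k‖ + d := by
            rw [hdy]
            gcongr
            exact hC _
        _ = d + C * ‖y + lpt bR k‖ := by ring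
    have h4 : (∑ i, ((k i : ℝ)) ^ 2) ≤ n * (d + C * ‖y + lpt bR k‖) ^ 2 := by
      calc (∑ i, ((k i : ℝ)) ^ 2) ≤ ∑ _i : Fin n, (d + C * ‖y + lpt bR k‖) ^ 2 := by
            refine Finset.sum_le_sum fun i _ => ?_
            have hle := (h1 i).trans h2
            calc ((k i : ℝ)) ^ 2 = |(k i : ℝ)| ^ 2 := (sq_abs _).symm
              _ ≤ (d + C * ‖y + lpt bR k‖) ^ 2 := by
                  exact pow_le_pow_left₀ (abs_nonneg _) hle 2
        _ = n * (d + C * ‖y + lpt bR k‖) ^ 2 := by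
            rw [Finset.sum_const, Finset.card_univ, Fintype.card_fin, nsmul_eq_mul]
    have h6 : (∑ i, ((k i : ℝ)) ^ 2) ≤ 2 * n * d ^ 2 + 2 * n * C ^ 2 * ‖y + lpt bR k‖ ^ 2 := by
      have h5 : (d + C * ‖y + lpt bR k‖) ^ 2 ≤ 2 * d ^ 2 + 2 * C ^ 2 * ‖y + lpt bR k‖ ^ 2 := by
        nlinarith [sq_nonneg (d - C * ‖y + lpt bR k‖)]
      calc (∑ i, ((k i : ℝ)) ^ 2) ≤ n * (2 * d ^ 2 + 2 * C ^ 2 * ‖y + lpt bR k‖ ^ 2) :=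
            h4.trans (by gcongr)
        _ = 2 * n * d ^ 2 + 2 * n * C ^ 2 * ‖y + lpt bR k‖ ^ 2 := by ring
    have h7 : -(π * t) * ‖y + lpt bR k‖ ^ 2 ≤
        π * t * d ^ 2 / C ^ 2 + -α * (∑ i, ((k i : ℝ)) ^ 2) := by
      have key : α * (∑ i, ((k i : ℝ)) ^ 2) ≤
          π * t * d ^ 2 / C ^ 2 + π * t * ‖y + lpt bR k‖ ^ 2 := by
        have hmul := mul_le_mul_of_nonneg_left h6 hα0.le
        refine hmul.trans (le_of_eq ?_)
        rw [hα]
        field_simp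
      linarith
    calc th bR t y k = rexp (-(π * t) * ‖y + lpt bR k‖ ^ 2) := rfl
      _ ≤ rexp (π * t * d ^ 2 / C ^ 2 + -α * (∑ i, ((k i : ℝ)) ^ 2)) := Real.exp_le_exp.2 h7
      _ = rexp (π * t * d ^ 2 / C ^ 2) * ∏ i, rexp (-α * ((k i : ℝ)) ^ 2) := by
          rw [Real.exp_add]
          congr 1
          rw [Finset.mul_sum, Real.exp_sum]
  refine Summable.of_nonneg_of_le (fun k => th_nonneg bR t y k) hbound ?_
  exact (summable_pi_prod (f := fun m : ℤ => rexp (-α * (m : ℝ) ^ 2))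
    (fun m => (Real.exp_pos _).le) (summable_exp_int_sq hα0) n).mul_left _

end LatticeSums

section LatticeSums2

variable {n : ℕ} (bR : Module.Basis (Fin n) ℝ (EuclideanSpace ℝ (Fin n)))

/-- The theta-like lattice sum. -/
noncomputable def TS (t : ℝ) (y : EuclideanSpace ℝ (Fin n)) : ℝ :=
  ∑' k : Fin n → ℤ, th bR t y k

lemma TS_nonneg (t : ℝ) (y : EuclideanSpace ℝ (Fin n)) : 0 ≤ TS bR t y :=
  tsum_nonneg fun k => th_nonneg bR t y k

lemma TS_pos {t : ℝ} (ht : 0 < t) (y : EuclideanSpace ℝ (Fin n)) : 0 < TS bR t y := by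
  have h := Summable.le_tsum (summable_th bR ht y) 0 (fun k _ => th_nonneg bR t y k)
  exact lt_of_lt_of_le (th_pos bR t y 0) h

lemma TS_translate (t : ℝ) (y : EuclideanSpace ℝ (Fin n)) (j : Fin n → ℤ) :
    TS bR t (y + lpt bR j) = TS bR t y := by
  have h : ∀ k, th bR t (y + lpt bR j) k = th bR t y (j + k) := by
    intro k
    unfold th
    rw [lpt_add, add_assoc]
  rw [TS]
  rw [tsum_congr h]
  exact (Equiv.addLeft j).tsum_eq (th bR t y)

/-- shift by a "half lattice vector" coming from `ε : Fin n → Bool`. -/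
noncomputable def hpt (ε : Fin n → Bool) : EuclideanSpace ℝ (Fin n) :=
  (2 : ℝ)⁻¹ • lpt bR (fun i => cond (ε i) 1 0)

/-- The core parallelogram norm identity. -/
lemma norm_parallelogram (z₁ z₂ c zm zm' : EuclideanSpace ℝ (Fin n)) :
    ‖z₁ + (c + zm + zm')‖ ^ 2 + ‖z₂ + (zm - zm')‖ ^ 2
      = 2 * (‖((2:ℝ)⁻¹ • (z₁ + z₂) + (2:ℝ)⁻¹ • c) + zm‖ ^ 2
        + ‖((2:ℝ)⁻¹ • (z₁ - z₂) + (2:ℝ)⁻¹ • c) + zm'‖ ^ 2) := by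
  have hx : (((2:ℝ)⁻¹ • (z₁ + z₂) + (2:ℝ)⁻¹ • c) + zm) + (((2:ℝ)⁻¹ • (z₁ - z₂) + (2:ℝ)⁻¹ • c) + zm')
      = z₁ + (c + zm + zm') := by
    module
  have hy : (((2:ℝ)⁻¹ • (z₁ + z₂) + (2:ℝ)⁻¹ • c) + zm) - (((2:ℝ)⁻¹ • (z₁ - z₂) + (2:ℝ)⁻¹ • c) + zm')
      = z₂ + (zm - zm') := by
    module
  have hpar := parallelogram_law_with_norm ℝ
    (((2:ℝ)⁻¹ • (z₁ + z₂) + (2:ℝ)⁻¹ • c) + zm) (((2:ℝ)⁻¹ • (z₁ - z₂) + (2:ℝ)⁻¹ • c) + zm')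
  rw [hx, hy] at hpar
  nlinarith [hpar]

/-- Product of two theta sums as a sum over pairs. -/
lemma TS_mul_TS {t : ℝ} (ht : 0 < t) (z₁ z₂ : EuclideanSpace ℝ (Fin n)) :
    TS bR t z₁ * TS bR t z₂ = ∑' p : (Fin n → ℤ) × (Fin n → ℤ), th bR t z₁ p.1 * th bR t z₂ p.2 := by
  have h1 : Summable fun k => ‖th bR t z₁ k‖ :=
    (summable_th bR ht z₁).congr fun k => (Real.norm_of_nonneg (th_nonneg _ _ _ _)).symm
  have h2 : Summable fun k => ‖th bR t z₂ k‖ :=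
    (summable_th bR ht z₂).congr fun k => (Real.norm_of_nonneg (th_nonneg _ _ _ _)).symm
  exact tsum_mul_tsum_of_summable_norm h1 h2

lemma summable_pair {t : ℝ} (ht : 0 < t) (z₁ z₂ : EuclideanSpace ℝ (Fin n)) :
    Summable fun p : (Fin n → ℤ) × (Fin n → ℤ) => th bR t z₁ p.1 * th bR t z₂ p.2 :=
  Summable.mul_of_nonneg (f := th bR t z₁) (g := th bR t z₂)
    (summable_th bR ht z₁) (summable_th bR ht z₂)
    (fun k => th_nonneg _ _ _ _) (fun k => th_nonneg _ _ _ _)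

/-- The key "doubling" identity. -/
lemma TS_doubling {t : ℝ} (ht : 0 < t) (z₁ z₂ : EuclideanSpace ℝ (Fin n)) :
    TS bR t z₁ * TS bR t z₂ =
      ∑ ε : Fin n → Bool,
        TS bR (2 * t) ((2:ℝ)⁻¹ • (z₁ + z₂) + hpt bR ε)
          * TS bR (2 * t) ((2:ℝ)⁻¹ • (z₁ - z₂) + hpt bR ε) := by
  classical
  rw [TS_mul_TS bR ht z₁ z₂]
  -- reindex by the parallelogram equivalence
  rw [← (flipEquivPi n).tsum_eq
    (f := fun p : (Fin n → ℤ) × (Fin n → ℤ) => th bR t z₁ p.1 * th bR t z₂ p.2)]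
  -- termwise identity
  have hterm : ∀ x : (Fin n → Bool) × (Fin n → ℤ) × (Fin n → ℤ),
      th bR t z₁ ((flipEquivPi n) x).1 * th bR t z₂ ((flipEquivPi n) x).2
      = th bR (2 * t) ((2:ℝ)⁻¹ • (z₁ + z₂) + hpt bR x.1) x.2.1
        * th bR (2 * t) ((2:ℝ)⁻¹ • (z₁ - z₂) + hpt bR x.1) x.2.2 := by
    rintro ⟨ε, m, m'⟩
    unfold th
    rw [← Real.exp_add, ← Real.exp_add]
    congr 1
    have hu : lpt bR (((flipEquivPi n) (ε, m, m')).1)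
        = lpt bR (fun i => cond (ε i) 1 0) + lpt bR m + lpt bR m' := by
      rw [show ((flipEquivPi n) (ε, m, m')).1 = (fun i => cond (ε i) 1 0) + m + m' from rfl]
      rw [lpt_add, lpt_add]
    have hw : lpt bR (((flipEquivPi n) (ε, m, m')).2) = lpt bR m - lpt bR m' := by
      rw [show ((flipEquivPi n) (ε, m, m')).2 = m - m' from rfl]
      have hneg : lpt bR (-m') = -lpt bR m' := by
        simp only [lpt, Pi.neg_apply, Int.cast_neg, neg_smul, ← Finset.sum_neg_distrib]
      rw [show m - m' = m + (-m') from sub_eq_add_neg m m', lpt_add, hneg, sub_eq_add_neg]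
    rw [hu, hw]
    have hnp := norm_parallelogram z₁ z₂ (lpt bR (fun i => cond (ε i) 1 0)) (lpt bR m) (lpt bR m')
    unfold hpt
    linear_combination (-(π * t)) * hnp
  rw [tsum_congr hterm]
  -- now split the triple sum
  have hsum : Summable fun x : (Fin n → Bool) × (Fin n → ℤ) × (Fin n → ℤ) =>
      th bR (2 * t) ((2:ℝ)⁻¹ • (z₁ + z₂) + hpt bR x.1) x.2.1
        * th bR (2 * t) ((2:ℝ)⁻¹ • (z₁ - z₂) + hpt bR x.1) x.2.2 := by
    have := ((flipEquivPi n).summable_iff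
      (f := fun p : (Fin n → ℤ) × (Fin n → ℤ) => th bR t z₁ p.1 * th bR t z₂ p.2)).2
      (summable_pair bR ht z₁ z₂)
    exact (this.congr hterm)
  rw [Summable.tsum_prod hsum, tsum_fintype]
  refine Finset.sum_congr rfl fun ε _ => ?_
  rw [TS_mul_TS bR (by linarith : (0:ℝ) < 2 * t)
    ((2:ℝ)⁻¹ • (z₁ + z₂) + hpt bR ε) ((2:ℝ)⁻¹ • (z₁ - z₂) + hpt bR ε)]

end LatticeSums2

section CenterMax

variable {n : ℕ} (bR : Module.Basis (Fin n) ℝ (EuclideanSpace ℝ (Fin n)))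

lemma floor_eq_lpt (y : EuclideanSpace ℝ (Fin n)) :
    ((ZSpan.floor bR y : Submodule.span ℤ (Set.range bR)) : EuclideanSpace ℝ (Fin n))
      = lpt bR (fun i => ⌊bR.repr y i⌋) := by
  refine bR.ext_elem fun i => ?_
  rw [ZSpan.repr_floor_apply]
  have := lpt_equivFun bR (fun i => ⌊bR.repr y i⌋) i
  rw [Module.Basis.equivFun_apply] at this
  rw [this]

/-- Uniform upper bound for the shifted theta sums. -/
lemma TS_le_uniform {t : ℝ} (ht : 0 < t) (y : EuclideanSpace ℝ (Fin n)) :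
    TS bR t y ≤ rexp (π * t * (∑ i, ‖bR i‖) ^ 2) * TS bR (t / 2) 0 := by
  set D : ℝ := ∑ i, ‖bR i‖ with hD
  set f : EuclideanSpace ℝ (Fin n) := ZSpan.fract bR y with hf
  have hyf : y = f + lpt bR (fun i => ⌊bR.repr y i⌋) := by
    rw [hf, ZSpan.fract_apply, ← floor_eq_lpt]
    abel
  have ht2 : TS bR t y = TS bR t f := by
    conv_lhs => rw [hyf]
    exact TS_translate bR t f _
  rw [ht2]
  have hfD : ‖f‖ ≤ D := ZSpan.norm_fract_le bR y
  have hD0 : 0 ≤ D := le_trans (norm_nonneg f) hfD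
  have hterm : ∀ k, th bR t f k ≤ rexp (π * t * D ^ 2) * th bR (t / 2) 0 k := by
    intro k
    unfold th
    rw [← Real.exp_add]
    apply Real.exp_le_exp.2
    have h2 : ‖lpt bR k‖ ^ 2 ≤ 2 * ‖f + lpt bR k‖ ^ 2 + 2 * D ^ 2 := by
      have h1 : ‖lpt bR k‖ ≤ ‖f + lpt bR k‖ + ‖f‖ := by
        calc ‖lpt bR k‖ = ‖(f + lpt bR k) - f‖ := by congr 1; abel
          _ ≤ ‖f + lpt bR k‖ + ‖f‖ := norm_sub_le _ _
      nlinarith [norm_nonneg (f + lpt bR k), norm_nonneg f, norm_nonneg (lpt bR k),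
        sq_nonneg (‖f + lpt bR k‖ - ‖f‖)]
    have h3 : ‖(0 : EuclideanSpace ℝ (Fin n)) + lpt bR k‖ = ‖lpt bR k‖ := by rw [zero_add]
    rw [h3]
    nlinarith [Real.pi_pos, mul_pos Real.pi_pos ht]
  calc TS bR t f ≤ ∑' k, rexp (π * t * D ^ 2) * th bR (t / 2) 0 k :=
        Summable.tsum_le_tsum hterm (summable_th bR ht f)
          ((summable_th bR (by linarith : (0:ℝ) < t / 2) 0).mul_left _)
    _ = rexp (π * t * D ^ 2) * TS bR (t / 2) 0 := tsum_mul_left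

/-- The central value dominates: `TS t y ≤ TS t 0`. -/
lemma TS_le_center {t : ℝ} (ht : 0 < t) (y : EuclideanSpace ℝ (Fin n)) :
    TS bR t y ≤ TS bR t 0 := by
  have ht2 : (0:ℝ) < 2 * t := by linarith
  -- the fourth-power inequality
  have pow4 : ∀ z : EuclideanSpace ℝ (Fin n),
      (TS bR t z) ^ 4 ≤ TS bR t (z + z) * (TS bR t 0) ^ 3 := by
    intro z
    have hI1 : TS bR t z * TS bR t z =
        ∑ ε : Fin n → Bool, TS bR (2*t) (z + hpt bR ε) * TS bR (2*t) (hpt bR ε) := by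
      have h := TS_doubling bR ht z z
      have hmid : (2:ℝ)⁻¹ • (z + z) = z := by module
      have hdiff : (2:ℝ)⁻¹ • (z - z) = 0 := by module
      rw [hmid, hdiff] at h
      simpa using h
    have hI2 : TS bR t (z + z) * TS bR t 0 =
        ∑ ε : Fin n → Bool, (TS bR (2*t) (z + hpt bR ε)) ^ 2 := by
      have h := TS_doubling bR ht (z + z) 0
      have hmid : (2:ℝ)⁻¹ • ((z + z) + 0) = z := by module
      have hdiff : (2:ℝ)⁻¹ • ((z + z) - 0) = z := by module
      rw [hmid, hdiff] at h
      rw [h]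
      exact Finset.sum_congr rfl fun ε _ => (sq (TS bR (2*t) (z + hpt bR ε))).symm
    have hI0 : TS bR t 0 * TS bR t 0 =
        ∑ ε : Fin n → Bool, (TS bR (2*t) (hpt bR ε)) ^ 2 := by
      have h := TS_doubling bR ht 0 0
      have hmid : (2:ℝ)⁻¹ • ((0:EuclideanSpace ℝ (Fin n)) + 0) = 0 := by module
      have hdiff : (2:ℝ)⁻¹ • ((0:EuclideanSpace ℝ (Fin n)) - 0) = 0 := by module
      rw [hmid, hdiff] at h
      rw [h]
      refine Finset.sum_congr rfl fun ε _ => ?_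
      rw [zero_add, sq]
    have hCS := Finset.sum_mul_sq_le_sq_mul_sq Finset.univ
      (fun ε : Fin n → Bool => TS bR (2*t) (z + hpt bR ε))
      (fun ε : Fin n → Bool => TS bR (2*t) (hpt bR ε))
    calc (TS bR t z) ^ 4 = (TS bR t z * TS bR t z) ^ 2 := by ring
      _ = (∑ ε : Fin n → Bool, TS bR (2*t) (z + hpt bR ε) * TS bR (2*t) (hpt bR ε)) ^ 2 := by
          rw [hI1]
      _ ≤ (∑ ε : Fin n → Bool, (TS bR (2*t) (z + hpt bR ε)) ^ 2)
            * ∑ ε : Fin n → Bool, (TS bR (2*t) (hpt bR ε)) ^ 2 := hCS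
      _ = (TS bR t (z + z) * TS bR t 0) * (TS bR t 0 * TS bR t 0) := by rw [← hI2, ← hI0]
      _ = TS bR t (z + z) * (TS bR t 0) ^ 3 := by ring
  -- logarithmic form
  have key : ∀ z : EuclideanSpace ℝ (Fin n),
      4 * (Real.log (TS bR t z) - Real.log (TS bR t 0))
        ≤ Real.log (TS bR t (z + z)) - Real.log (TS bR t 0) := by
    intro z
    have h1 : Real.log ((TS bR t z) ^ 4) ≤ Real.log (TS bR t (z + z) * (TS bR t 0) ^ 3) :=
      Real.log_le_log (pow_pos (TS_pos bR ht z) 4) (pow4 z)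
    rw [Real.log_pow, Real.log_mul (TS_pos bR ht (z+z)).ne' (pow_pos (TS_pos bR ht 0) 3).ne',
      Real.log_pow] at h1
    push_cast at h1
    linarith
  -- iterate
  set T0 := TS bR t 0 with hT0
  obtain ⟨U, hU, hUb⟩ : ∃ U : ℝ, 0 < U ∧ ∀ z : EuclideanSpace ℝ (Fin n), TS bR t z ≤ U := by
    refine ⟨rexp (π * t * (∑ i, ‖bR i‖) ^ 2) * TS bR (t / 2) 0,
      mul_pos (Real.exp_pos _) (TS_pos bR (by linarith : (0:ℝ) < t/2) 0),
      fun z => TS_le_uniform bR ht z⟩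
  set ys : ℕ → EuclideanSpace ℝ (Fin n) := fun k => (2 ^ k : ℝ) • y with hys
  have hys0 : ys 0 = y := by simp [hys]
  have hyssucc : ∀ k, ys (k + 1) = ys k + ys k := by
    intro k
    rw [hys]
    show (2 ^ (k+1) : ℝ) • y = (2 ^ k : ℝ) • y + (2 ^ k : ℝ) • y
    rw [pow_succ, mul_comm, mul_smul, two_smul]
  have iter : ∀ k : ℕ, (4:ℝ) ^ k * (Real.log (TS bR t y) - Real.log T0)
      ≤ Real.log (TS bR t (ys k)) - Real.log T0 := by
    intro k
    induction k with
    | zero => simp [hys0]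
    | succ k ih =>
        calc (4:ℝ) ^ (k+1) * (Real.log (TS bR t y) - Real.log T0)
            = 4 * ((4:ℝ) ^ k * (Real.log (TS bR t y) - Real.log T0)) := by ring
          _ ≤ 4 * (Real.log (TS bR t (ys k)) - Real.log T0) := by linarith
          _ ≤ Real.log (TS bR t (ys k + ys k)) - Real.log T0 := key (ys k)
          _ = Real.log (TS bR t (ys (k+1))) - Real.log T0 := by rw [← hyssucc]
  have habs : Real.log (TS bR t y) - Real.log T0 ≤ 0 := by
    by_contra hpos
    push_neg at hpos
    obtain ⟨k, hk⟩ := pow_unbounded_of_one_lt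
      ((Real.log U - Real.log T0) / (Real.log (TS bR t y) - Real.log T0))
      (by norm_num : (1:ℝ) < 4)
    have h1 : Real.log (TS bR t (ys k)) ≤ Real.log U :=
      Real.log_le_log (TS_pos bR ht (ys k)) (hUb (ys k))
    have h2 := iter k
    rw [div_lt_iff₀ hpos] at hk
    linarith
  have hlog := Real.log_le_log_iff (TS_pos bR ht y) (TS_pos bR ht 0)
  exact hlog.1 (by linarith)

end CenterMax

section SmallT

open MeasureTheory

variable {n : ℕ} (bR : Module.Basis (Fin n) ℝ (EuclideanSpace ℝ (Fin n)))

lemma gauss_integrable {b : ℝ} (hb : 0 < b) :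
    Integrable (fun z : EuclideanSpace ℝ (Fin n) => rexp (-(π * b) * ‖z‖ ^ 2)) volume := by
  have h := GaussianFourier.integrable_cexp_neg_mul_sq_norm_add
    (b := ((π * b : ℝ) : ℂ)) (by simpa using (by positivity : (0:ℝ) < π * b))
    0 (0 : EuclideanSpace ℝ (Fin n))
  have h2 := h.norm
  refine h2.congr ?_
  filter_upwards with z
  rw [zero_mul, add_zero]
  rw [Complex.norm_exp]
  congr 1
  have h3 : -((π * b : ℝ) : ℂ) * ((‖z‖:ℝ) : ℂ) ^ 2 = ((-(π * b) * ‖z‖^2 : ℝ) : ℂ) := by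
    push_cast
    ring
  rw [h3, Complex.ofReal_re]

lemma gauss_integral {b : ℝ} (hb : 0 < b) :
    ∫ z : EuclideanSpace ℝ (Fin n), rexp (-(π * b) * ‖z‖ ^ 2) = b ^ (-(n:ℝ) / 2) := by
  have h := GaussianFourier.integral_rexp_neg_mul_sq_norm
    (V := EuclideanSpace ℝ (Fin n)) (b := π * b) (by positivity)
  rw [h, finrank_euclideanSpace_fin]
  rw [show π / (π * b) = b⁻¹ by field_simp]
  rw [Real.inv_rpow hb.le, ← Real.rpow_neg hb.le]
  congr 1
  ring

/-- The comparison `TS s 0 ≤ (1/s)^(n/2) TS 1 0` for `0 < s < 1`. -/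
lemma TS_small (s : ℝ) (hs : 0 < s) (hs1 : s < 1) :
    TS bR s 0 ≤ (1 / s) ^ ((n:ℝ) / 2) * TS bR 1 0 := by
  have hs1' : (0:ℝ) < 1 - s := by linarith
  set a : ℝ := s / (1 - s) with ha
  have ha0 : 0 < a := by positivity
  have ha1 : 0 < a + 1 := by linarith
  have hsa : s * (a + 1) = a := by
    rw [ha]
    field_simp
    ring
  -- pointwise completed square
  have hpoint : ∀ v z : EuclideanSpace ℝ (Fin n),
      -(π * a) * ‖z‖ ^ 2 + -(π * 1) * ‖z + v‖ ^ 2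
        = -(π * s) * ‖v‖ ^ 2 + -(π * (a+1)) * ‖z + (a+1)⁻¹ • v‖ ^ 2 := by
    intro v z
    rw [norm_add_sq_real z v, norm_add_sq_real z ((a+1)⁻¹ • v), real_inner_smul_right,
      norm_smul]
    rw [Real.norm_eq_abs, mul_pow, sq_abs]
    have h1 : (a+1) ≠ 0 := ha1.ne'
    have hinv : (a+1) * (a+1)⁻¹ = 1 := mul_inv_cancel₀ h1
    linear_combination (2*π*inner ℝ z v + π*‖v‖^2*(a+1)⁻¹ - π*‖v‖^2*(s-1)) * hinv
      + π*‖v‖^2*(a+1)⁻¹ * hsa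
  -- per-term integral identity
  have hint : ∀ k : Fin n → ℤ,
      ∫ z : EuclideanSpace ℝ (Fin n), rexp (-(π * a) * ‖z‖ ^ 2) * th bR 1 z k
        = (a+1) ^ (-(n:ℝ)/2) * th bR s 0 k := by
    intro k
    have hfeq : ∀ z : EuclideanSpace ℝ (Fin n),
        rexp (-(π * a) * ‖z‖ ^ 2) * th bR 1 z k
          = rexp (-(π * s) * ‖lpt bR k‖ ^ 2)
            * rexp (-(π * (a+1)) * ‖z + (a+1)⁻¹ • lpt bR k‖ ^ 2) := by
      intro z
      unfold th
      rw [← Real.exp_add, ← Real.exp_add]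
      congr 1
      exact hpoint (lpt bR k) z
    rw [show (fun z : EuclideanSpace ℝ (Fin n) => rexp (-(π * a) * ‖z‖ ^ 2) * th bR 1 z k)
        = fun z => rexp (-(π * s) * ‖lpt bR k‖ ^ 2)
          * rexp (-(π * (a+1)) * ‖z + (a+1)⁻¹ • lpt bR k‖ ^ 2) from funext hfeq]
    rw [MeasureTheory.integral_const_mul]
    rw [MeasureTheory.integral_add_right_eq_self
      (fun z : EuclideanSpace ℝ (Fin n) => rexp (-(π * (a+1)) * ‖z‖ ^ 2)) ((a+1)⁻¹ • lpt bR k)]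
    rw [gauss_integral ha1]
    unfold th
    rw [zero_add]
    ring
  have hintg : ∀ k : Fin n → ℤ,
      Integrable (fun z : EuclideanSpace ℝ (Fin n) =>
        rexp (-(π * a) * ‖z‖ ^ 2) * th bR 1 z k) volume := by
    intro k
    have h1 : Integrable (fun z : EuclideanSpace ℝ (Fin n) =>
        rexp (-(π * (a+1)) * ‖z + (a+1)⁻¹ • lpt bR k‖ ^ 2)) volume :=
      (gauss_integrable ha1).comp_add_right _
    have h2 := h1.const_mul (rexp (-(π * s) * ‖lpt bR k‖ ^ 2))
    refine h2.congr ?_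
    filter_upwards with z
    unfold th
    rw [← Real.exp_add, ← Real.exp_add]
    congr 1
    exact (hpoint (lpt bR k) z).symm
  have hcont : ∀ k : Fin n → ℤ, Continuous fun z : EuclideanSpace ℝ (Fin n) =>
      rexp (-(π * a) * ‖z‖ ^ 2) * th bR 1 z k := by
    intro k
    unfold th
    exact (Real.continuous_exp.comp (continuous_const.mul (continuous_norm.pow 2))).mul
      (Real.continuous_exp.comp
        (continuous_const.mul (((continuous_id.add continuous_const).norm).pow 2)))
  have hpos : ∀ (k : Fin n → ℤ) (z : EuclideanSpace ℝ (Fin n)),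
      0 ≤ rexp (-(π * a) * ‖z‖ ^ 2) * th bR 1 z k :=
    fun k z => mul_nonneg (Real.exp_pos _).le (th_nonneg _ _ _ _)
  -- interchange sum and integral
  have hswap : ∫ z : EuclideanSpace ℝ (Fin n), rexp (-(π * a) * ‖z‖ ^ 2) * TS bR 1 z
      = ∑' k : Fin n → ℤ, ∫ z : EuclideanSpace ℝ (Fin n),
          rexp (-(π * a) * ‖z‖ ^ 2) * th bR 1 z k := by
    rw [show (fun z : EuclideanSpace ℝ (Fin n) => rexp (-(π * a) * ‖z‖ ^ 2) * TS bR 1 z)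
        = fun z => ∑' k : Fin n → ℤ, rexp (-(π * a) * ‖z‖ ^ 2) * th bR 1 z k from
        funext fun z => (tsum_mul_left).symm]
    refine MeasureTheory.integral_tsum (fun k => (hcont k).aestronglyMeasurable) ?_
    have heval : ∀ k : Fin n → ℤ,
        (∫⁻ z : EuclideanSpace ℝ (Fin n), ‖rexp (-(π * a) * ‖z‖ ^ 2) * th bR 1 z k‖ₑ)
          = ENNReal.ofReal ((a+1) ^ (-(n:ℝ)/2) * th bR s 0 k) := by
      intro k
      rw [← MeasureTheory.ofReal_integral_norm_eq_lintegral_enorm (hintg k)]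
      congr 1
      rw [← hint k]
      refine MeasureTheory.integral_congr_ae (Filter.Eventually.of_forall fun z => ?_)
      exact Real.norm_of_nonneg (hpos k z)
    rw [tsum_congr heval]
    rw [← ENNReal.ofReal_tsum_of_nonneg
      (fun k => mul_nonneg (Real.rpow_pos_of_pos ha1 _).le (th_nonneg _ _ _ _))
      ((summable_th bR hs 0).mul_left _)]
    exact ENNReal.ofReal_ne_top
  -- main estimate
  have hmain : (a+1) ^ (-(n:ℝ)/2) * TS bR s 0 ≤ a ^ (-(n:ℝ)/2) * TS bR 1 0 := by
    calc (a+1) ^ (-(n:ℝ)/2) * TS bR s 0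
        = ∑' k : Fin n → ℤ, (a+1) ^ (-(n:ℝ)/2) * th bR s 0 k := tsum_mul_left.symm
      _ = ∑' k : Fin n → ℤ, ∫ z : EuclideanSpace ℝ (Fin n),
            rexp (-(π * a) * ‖z‖ ^ 2) * th bR 1 z k := tsum_congr fun k => (hint k).symm
      _ = ∫ z : EuclideanSpace ℝ (Fin n), rexp (-(π * a) * ‖z‖ ^ 2) * TS bR 1 z := hswap.symm
      _ ≤ ∫ z : EuclideanSpace ℝ (Fin n), rexp (-(π * a) * ‖z‖ ^ 2) * TS bR 1 0 := by
          refine MeasureTheory.integral_mono_of_nonneg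
            (Filter.Eventually.of_forall fun z => ?_)
            ((gauss_integrable ha0).mul_const _)
            (Filter.Eventually.of_forall fun z => ?_)
          · exact mul_nonneg (Real.exp_pos _).le (TS_nonneg bR 1 z)
          · exact mul_le_mul_of_nonneg_left (TS_le_center bR one_pos z) (Real.exp_pos _).le
      _ = (∫ z : EuclideanSpace ℝ (Fin n), rexp (-(π * a) * ‖z‖ ^ 2)) * TS bR 1 0 :=
          MeasureTheory.integral_mul_const _ _
      _ = a ^ (-(n:ℝ)/2) * TS bR 1 0 := by rw [gauss_integral ha0]
  -- algebra to conclude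
  rw [show (-(n:ℝ)/2) = -((n:ℝ)/2) from by ring] at hmain
  rw [Real.rpow_neg ha1.le, Real.rpow_neg ha0.le] at hmain
  have hstep : TS bR s 0 ≤ (a+1) ^ ((n:ℝ)/2) * ((a ^ ((n:ℝ)/2))⁻¹ * TS bR 1 0) := by
    rw [← inv_mul_le_iff₀ (Real.rpow_pos_of_pos ha1 _)]
    exact hmain
  refine hstep.trans (le_of_eq ?_)
  rw [← mul_assoc]
  congr 1
  have hdiv : 1 / s = (a+1) / a := by
    rw [ha]
    field_simp
    ring
  rw [hdiv, Real.div_rpow ha1.le ha0.le]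
  exact (div_eq_mul_inv _ _).symm

end SmallT

end ThetaBound

open ThetaBound Real

/-- Let `L` be a Euclidean lattice of positive rank `n` whose first minimum
`λ₁(L) = inf {‖v‖ : v ∈ L, v ≠ 0}` satisfies `λ₁(L) = √(n/(2π))·λ̃` with `λ̃ > 1`.  Then
`θ_L(1) = ∑_{v ∈ L} e^{-π‖v‖²} ≤ (1 - β(λ̃)ⁿ)⁻¹`, where `β(r) = r·e^{-(r²-1)/2}`. -/
theorem theta_le_of_firstMinimum_gt (n : ℕ) (hn : 0 < n)
    (L : Submodule ℤ (EuclideanSpace ℝ (Fin n))) [DiscreteTopology L] [IsZLattice ℝ L]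
    (lam : ℝ) (hlam : lam > 1)
    (h1 : sInf {r : ℝ | ∃ v ∈ L, v ≠ 0 ∧ ‖v‖ = r} = Real.sqrt (n / (2 * Real.pi)) * lam) :
    (∑' v : L, Real.exp (-Real.pi * ‖(v : EuclideanSpace ℝ (Fin n))‖ ^ 2)) ≤
      (1 - (lam * Real.exp (-(lam ^ 2 - 1) / 2)) ^ n)⁻¹ := by
  classical
  have hlam0 : (0:ℝ) < lam := lt_trans one_pos hlam
  -- choose a ℤ-basis of the lattice indexed by `Fin n`
  have hcard : Fintype.card (Module.Free.ChooseBasisIndex ℤ L) = n := by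
    rw [← Module.finrank_eq_card_chooseBasisIndex, ZLattice.rank ℝ L,
      finrank_euclideanSpace_fin]
  let b : Module.Basis (Fin n) ℤ L :=
    (Module.Free.chooseBasis ℤ L).reindex (Fintype.equivFinOfCardEq hcard)
  let bR : Module.Basis (Fin n) ℝ (EuclideanSpace ℝ (Fin n)) := Module.Basis.ofZLatticeBasis ℝ L b
  let e : (Fin n → ℤ) ≃ L := b.equivFun.symm.toEquiv
  have hcoe : ∀ k : Fin n → ℤ, ((e k : L) : EuclideanSpace ℝ (Fin n)) = lpt bR k := by
    intro k
    show ((b.equivFun.symm k : L) : EuclideanSpace ℝ (Fin n)) = lpt bR k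
    rw [Module.Basis.equivFun_symm_apply]
    rw [lpt]
    push_cast
    refine Finset.sum_congr rfl fun i _ => ?_
    rw [← Module.Basis.ofZLatticeBasis_apply ℝ L b i]
    exact (Int.cast_smul_eq_zsmul ℝ (k i) ((b.ofZLatticeBasis ℝ L) i)).symm
  -- identify the theta series
  have hθ : (∑' v : L, Real.exp (-Real.pi * ‖(v : EuclideanSpace ℝ (Fin n))‖ ^ 2))
      = TS bR 1 0 := by
    rw [← e.tsum_eq (fun v : L => Real.exp (-Real.pi * ‖(v : EuclideanSpace ℝ (Fin n))‖ ^ 2))]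
    refine tsum_congr fun k => ?_
    rw [hcoe k]
    unfold ThetaBound.th
    rw [zero_add, mul_one]
  -- the minimum-norm bound
  have hmin : ∀ k : Fin n → ℤ, k ≠ 0 →
      Real.sqrt (n / (2 * π)) * lam ≤ ‖lpt bR k‖ := by
    intro k hk
    have hkL : lpt bR k ∈ L := by rw [← hcoe k]; exact (e k).2
    have hk0 : lpt bR k ≠ 0 := by
      rw [← hcoe k]
      simp only [ne_eq, ZeroMemClass.coe_eq_zero]
      intro h0
      apply hk
      have : b.equivFun.symm k = 0 := h0
      have h2 := b.equivFun.symm.map_eq_zero_iff.1 this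
      exact h2
    rw [← h1]
    refine csInf_le ⟨0, ?_⟩ ⟨lpt bR k, hkL, hk0, rfl⟩
    rintro r ⟨v, _, _, rfl⟩
    exact norm_nonneg v
  -- parameters
  set s : ℝ := (lam ^ 2)⁻¹ with hsdef
  have hlam2 : 1 < lam ^ 2 := by nlinarith
  have hs0 : 0 < s := by positivity
  have hs1 : s < 1 := by
    rw [hsdef]
    rw [inv_lt_one_iff₀]
    right
    exact hlam2
  set q : ℝ := (lam * Real.exp (-(lam ^ 2 - 1) / 2)) ^ n with hq
  set c : ℝ := Real.exp (-((n:ℝ) / 2 * (lam ^ 2 - 1))) with hc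
  -- the splitting bound
  have hsplit : TS bR 1 0 ≤ 1 + c * TS bR s 0 := by
    rw [TS, Summable.tsum_eq_add_tsum_ite (summable_th bR one_pos 0) 0]
    have h0 : ThetaBound.th bR 1 0 0 = 1 := by
      unfold ThetaBound.th
      rw [lpt_zero, add_zero, norm_zero]
      norm_num
    rw [h0]
    gcongr
    rw [show c * TS bR s 0 = ∑' k : Fin n → ℤ, c * ThetaBound.th bR s 0 k from tsum_mul_left.symm]
    refine Summable.tsum_le_tsum ?_ ?_ ?_
    · intro k
      by_cases hk : k = 0
      · simp only [hk, if_pos rfl]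
        exact mul_nonneg (Real.exp_pos _).le (th_nonneg _ _ _ _)
      · rw [if_neg hk]
        have hRle := hmin k hk
        have hR2 : (Real.sqrt ((n:ℝ) / (2 * π)) * lam) ^ 2 = (n:ℝ) / (2 * π) * lam ^ 2 := by
          rw [mul_pow, Real.sq_sqrt (by positivity)]
        have hnorm2 : (n:ℝ) / (2 * π) * lam ^ 2 ≤ ‖lpt bR k‖ ^ 2 := by
          rw [← hR2]
          exact pow_le_pow_left₀ (by positivity) hRle 2
        unfold ThetaBound.th
        rw [zero_add, ← Real.exp_add]
        apply Real.exp_le_exp.2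
        have hexpand : -(π * 1) * ‖lpt bR k‖ ^ 2
            = -(π * (1 - s)) * ‖lpt bR k‖ ^ 2 + -(π * s) * ‖lpt bR k‖ ^ 2 := by ring
        rw [hexpand]
        have hps : 0 < π * (1 - s) := by
          have := Real.pi_pos
          nlinarith
        have hkey : -(π * (1 - s)) * ‖lpt bR k‖ ^ 2 ≤ -((n:ℝ) / 2 * (lam ^ 2 - 1)) := by
          have h2 : π * (1 - s) * ((n:ℝ) / (2 * π) * lam ^ 2)
              ≤ π * (1 - s) * ‖lpt bR k‖ ^ 2 :=
            mul_le_mul_of_nonneg_left hnorm2 hps.le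
          have h3 : π * (1 - s) * ((n:ℝ) / (2 * π) * lam ^ 2) = (n:ℝ) / 2 * (lam ^ 2 - 1) := by
            rw [hsdef]
            have hπ : π ≠ 0 := Real.pi_ne_zero
            have hl2 : lam ^ 2 ≠ 0 := by positivity
            field_simp
          linarith
        linarith
    · exact Summable.of_nonneg_of_le
        (fun k => by by_cases hk : k = 0 <;> simp [hk, th_nonneg])
        (fun k => by
          by_cases hk : k = 0
          · simp [hk, th_nonneg]
          · rw [if_neg hk])
        (summable_th bR one_pos 0)
    · exact (summable_th bR hs0 0).mul_left _
  -- apply the scaling comparison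
  have hM := TS_small bR s hs0 hs1
  have hcq : c * (1 / s) ^ ((n:ℝ) / 2) = q := by
    have h1s : 1 / s = lam ^ 2 := by
      rw [hsdef, one_div, inv_inv]
    rw [h1s]
    have h2 : (lam ^ 2 : ℝ) ^ ((n:ℝ) / 2) = lam ^ n := by
      rw [← Real.rpow_natCast lam 2, ← Real.rpow_mul hlam0.le, ← Real.rpow_natCast lam n]
      congr 1
      push_cast
      ring
    rw [h2, hc, hq]
    rw [show -((n:ℝ) / 2 * (lam ^ 2 - 1)) = (n:ℝ) * (-(lam ^ 2 - 1) / 2) from by ring]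
    rw [Real.exp_nat_mul, mul_pow]
    ring
  have hchain : TS bR 1 0 ≤ 1 + q * TS bR 1 0 := by
    have h2 : c * TS bR s 0 ≤ c * ((1 / s) ^ ((n:ℝ) / 2) * TS bR 1 0) :=
      mul_le_mul_of_nonneg_left hM (Real.exp_pos _).le
    rw [← mul_assoc, hcq] at h2
    linarith
  -- conclude
  have hβ : lam * Real.exp (-(lam ^ 2 - 1) / 2) < 1 := by
    have hlog : Real.log lam < (lam ^ 2 - 1) / 2 := by
      have h1 := Real.log_lt_sub_one_of_pos hlam0 (by linarith : lam ≠ 1)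
      nlinarith
    have h2 : lam < Real.exp ((lam ^ 2 - 1) / 2) := by
      calc lam = Real.exp (Real.log lam) := (Real.exp_log hlam0).symm
        _ < Real.exp ((lam ^ 2 - 1) / 2) := Real.exp_lt_exp.2 hlog
    have h3 : Real.exp (-(lam ^ 2 - 1) / 2) = (Real.exp ((lam ^ 2 - 1) / 2))⁻¹ := by
      rw [← Real.exp_neg]
      congr 1
      ring
    rw [h3]
    rw [mul_inv_lt_iff₀ (Real.exp_pos _)]
    linarith
  have hq1 : q < 1 := by
    rw [hq]
    exact pow_lt_one₀ (by positivity) hβ hn.ne'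
  have hq0 : 0 ≤ q := by rw [hq]; positivity
  have h1q : 0 < 1 - q := by linarith
  rw [hθ]
  have hX := TS_pos bR one_pos (0 : EuclideanSpace ℝ (Fin n))
  rw [show (1 - (lam * Real.exp (-(lam ^ 2 - 1) / 2)) ^ n)⁻¹ = (1 - q)⁻¹ from by rw [hq]]
  have hfin : TS bR 1 0 * (1 - q) ≤ 1 := by nlinarith
  calc TS bR 1 0 = TS bR 1 0 * (1 - q) * (1 - q)⁻¹ := by field_simp
    _ ≤ 1 * (1 - q)⁻¹ := mul_le_mul_of_nonneg_right hfin (inv_nonneg.2 h1q.le)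
    _ = (1 - q)⁻¹ := one_mul _
end
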